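/- Assume a d×d matrix-valued function Φ(x) and projection Q satisfy the bounded dichotomy estimates ‖Φ(x)QΦ(x')⁻¹‖ ≤ M for x ≥ x' and ‖Φ(x)(I−Q)Φ(x')⁻¹‖ ≤ M for x ≤ x'. If ‖R(·)‖ ∈ L¹(ℝ) and R_ℓ, R_r are the factors of the polar decomposition factorization R = R_ℓ R_r with ‖R_r(x)‖, ‖R_ℓ(x)‖ ≤ ‖R(x)‖^{1/2}, then the integral kernel K(x,x') defined by K(x,x') = −R_r(x)Φ(x)QΦ(x')⁻¹R_ℓ(x') for x ≥ x' and K(x,x') = R_r(x)Φ(x)(I−Q)Φ(x')⁻¹R_ℓ(x') for x < x' satisfies ∬ ‖K(x,x')‖² dx dx' ≤ M² (∫ ‖R(x)‖ dx)², and hence defines a Hilbert–Schmidt operator on L²(ℝ)^d. -/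

import Mathlib

open MeasureTheory
open scoped Matrix.Norms.L2Operator NNReal ENNReal

/-! On both sides of the diagonal the dichotomy bounds give
`‖K(x,x')‖ ≤ M ‖R(x)‖^{1/2} ‖R(x')‖^{1/2}`, so `‖K‖²` is dominated by the product kernel
`M² ‖R(x)‖ ‖R(x')‖`, whose double integral is `M² (∫ ‖R‖)²` by Tonelli. -/

lemma sq_norm_mul_mul_le {A : Type*} [NonUnitalSeminormedRing A] {a b c : A} {r s M : ℝ}
    (ha : ‖a‖ ≤ √r) (hb : ‖b‖ ≤ M) (hc : ‖c‖ ≤ √s) (hr : 0 ≤ r) (hs : 0 ≤ s) :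
    ‖a * b * c‖ ^ 2 ≤ M ^ 2 * (r * s) := by
  have hM : 0 ≤ M := (norm_nonneg b).trans hb
  calc ‖a * b * c‖ ^ 2 ≤ (‖a‖ * ‖b‖ * ‖c‖) ^ 2 := by
        gcongr; exact norm_mul₃_le
    _ ≤ (√r * M * √s) ^ 2 := by gcongr
    _ = M ^ 2 * (r * s) := by
        rw [mul_pow, mul_pow, Real.sq_sqrt hr, Real.sq_sqrt hs]; ring

lemma lintegral_prod_ofReal_le_mul_sq_integral {α : Type*} [MeasurableSpace α]
    {μ : Measure α} [SFinite μ] {g : α × α → ℝ} {f : α → ℝ} {C : ℝ}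
    (hf : Integrable f μ) (hf0 : 0 ≤ f) (hg : ∀ p, g p ≤ C * (f p.1 * f p.2)) :
    ∫⁻ p, ENNReal.ofReal (g p) ∂μ.prod μ ≤ ENNReal.ofReal (C * (∫ x, f x ∂μ) ^ 2) := by
  have hf_meas : AEMeasurable (fun x => ENNReal.ofReal (f x)) μ :=
    hf.aestronglyMeasurable.aemeasurable.ennreal_ofReal
  have hf_int : ∫⁻ x, ENNReal.ofReal (f x) ∂μ = ENNReal.ofReal (∫ x, f x ∂μ) :=
    (ofReal_integral_eq_lintegral_ofReal hf (.of_forall hf0)).symm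
  calc ∫⁻ p, ENNReal.ofReal (g p) ∂μ.prod μ
      ≤ ∫⁻ p, ENNReal.ofReal C * (ENNReal.ofReal (f p.1) * ENNReal.ofReal (f p.2)) ∂μ.prod μ := by
        refine lintegral_mono fun p => ?_
        rw [← ENNReal.ofReal_mul (hf0 p.1), ← ENNReal.ofReal_mul' (mul_nonneg (hf0 p.1) (hf0 p.2))]
        exact ENNReal.ofReal_le_ofReal (hg p)
    _ = ENNReal.ofReal C * (ENNReal.ofReal (∫ x, f x ∂μ)) ^ 2 := by
        rw [lintegral_const_mul' _ _ ENNReal.ofReal_ne_top, lintegral_prod_mul hf_meas hf_meas,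
          hf_int, sq]
    _ = ENNReal.ofReal (C * (∫ x, f x ∂μ) ^ 2) := by
        rw [ENNReal.ofReal_mul' (sq_nonneg _), ENNReal.ofReal_pow (integral_nonneg hf0)]

theorem stmt_3_general (d : ℕ) (Φ : ℝ → Matrix (Fin d) (Fin d) ℂ)
    (Q : Matrix (Fin d) (Fin d) ℂ) (M : ℝ)
    (hdich1 : ∀ x x' : ℝ, x' ≤ x → ‖Φ x * Q * (Φ x')⁻¹‖ ≤ M)
    (hdich2 : ∀ x x' : ℝ, x ≤ x' → ‖Φ x * (1 - Q) * (Φ x')⁻¹‖ ≤ M)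
    (R Rl Rr : ℝ → Matrix (Fin d) (Fin d) ℂ)
    (hRl : ∀ x, ‖Rl x‖ ≤ Real.sqrt ‖R x‖)
    (hRr : ∀ x, ‖Rr x‖ ≤ Real.sqrt ‖R x‖)
    (hRint : Integrable (fun x => ‖R x‖))
    (K : ℝ → ℝ → Matrix (Fin d) (Fin d) ℂ)
    (hK : ∀ x x' : ℝ, K x x' =
      if x' ≤ x then -(Rr x * (Φ x * Q * (Φ x')⁻¹) * Rl x')
      else Rr x * (Φ x * (1 - Q) * (Φ x')⁻¹) * Rl x') :
    ∫⁻ p : ℝ × ℝ, (‖K p.1 p.2‖₊ : ℝ≥0∞) ^ 2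
      ≤ ENNReal.ofReal (M ^ 2 * (∫ x : ℝ, ‖R x‖) ^ 2) := by
  have hK_sq : ∀ p : ℝ × ℝ, ‖K p.1 p.2‖ ^ 2 ≤ M ^ 2 * (‖R p.1‖ * ‖R p.2‖) := by
    rintro ⟨x, x'⟩
    rw [hK]
    split_ifs with h
    · rw [norm_neg]
      exact sq_norm_mul_mul_le (hRr x) (hdich1 x x' h) (hRl x') (norm_nonneg _) (norm_nonneg _)
    · exact sq_norm_mul_mul_le (hRr x) (hdich2 x x' (le_of_not_ge h)) (hRl x')
        (norm_nonneg _) (norm_nonneg _)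
  have hK_enorm : ∀ p : ℝ × ℝ, (‖K p.1 p.2‖₊ : ℝ≥0∞) ^ 2 = ENNReal.ofReal (‖K p.1 p.2‖ ^ 2) :=
    fun p => by rw [ENNReal.ofReal_pow (norm_nonneg _), ofReal_norm, enorm_eq_nnnorm]
  simp_rw [hK_enorm, Measure.volume_eq_prod]
  exact lintegral_prod_ofReal_le_mul_sq_integral hRint (fun _ => norm_nonneg _) hK_sq

/-- Under a bounded dichotomy `Q` for `Φ` with constant `M`, and a factorization
`R = R_ℓ R_r` with `‖R_r(x)‖, ‖R_ℓ(x)‖ ≤ ‖R(x)‖^{1/2}` and `‖R(·)‖ ∈ L¹(ℝ)`, the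
Birman–Schwinger kernel `K` satisfies `∬ ‖K(x,x')‖² dx dx' ≤ M² (∫ ‖R(x)‖ dx)²`,
and hence defines a Hilbert–Schmidt operator on `L²(ℝ)^d`. -/
theorem stmt_3 (d : ℕ) (Φ : ℝ → Matrix (Fin d) (Fin d) ℂ)
    (Q : Matrix (Fin d) (Fin d) ℂ) (M : ℝ) (hM : 1 ≤ M)
    (hΦ : ∀ x, IsUnit (Φ x))
    (hdich1 : ∀ x x' : ℝ, x' ≤ x → ‖Φ x * Q * (Φ x')⁻¹‖ ≤ M)
    (hdich2 : ∀ x x' : ℝ, x ≤ x' → ‖Φ x * (1 - Q) * (Φ x')⁻¹‖ ≤ M)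
    (R Rl Rr : ℝ → Matrix (Fin d) (Fin d) ℂ)
    (hfact : ∀ x, R x = Rl x * Rr x)
    (hRl : ∀ x, ‖Rl x‖ ≤ Real.sqrt ‖R x‖)
    (hRr : ∀ x, ‖Rr x‖ ≤ Real.sqrt ‖R x‖)
    (hRint : Integrable (fun x => ‖R x‖))
    (K : ℝ → ℝ → Matrix (Fin d) (Fin d) ℂ)
    (hK : ∀ x x' : ℝ, K x x' =
      if x' ≤ x then -(Rr x * (Φ x * Q * (Φ x')⁻¹) * Rl x')
      else Rr x * (Φ x * (1 - Q) * (Φ x')⁻¹) * Rl x') :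
    ∫⁻ p : ℝ × ℝ, (‖K p.1 p.2‖₊ : ℝ≥0∞) ^ 2
      ≤ ENNReal.ofReal (M ^ 2 * (∫ x : ℝ, ‖R x‖) ^ 2) :=
  stmt_3_general d Φ Q M hdich1 hdich2 R Rl Rr hRl hRr hRint K hK
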